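/- Let k ∈ ℝ³, regarded as an element of ℂ³. Suppose Ê, B̂ : [0, ∞) → ℂ³ are differentiable and Ĝ : [0, ∞) → ℂ³ satisfies, for every t ≥ 0, ∂ₜÊ(t) − i k × B̂(t) = −Ĝ(t) and ∂ₜB̂(t) + i k × Ê(t) = 0. Then for every t ≥ 0, d/dt ( (−i k × B̂(t) | Ê(t)) ) + |k × B̂(t)|² = |k × Ê(t)|² + (i k × B̂(t) | Ĝ(t)). -/

import Mathlib

open Complex Set

/-- The ℂ-bilinear cross product on ℂ³. -/
def cross3 (a b : Fin 3 → ℂ) : Fin 3 → ℂ :=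
  ![a 1 * b 2 - a 2 * b 1, a 2 * b 0 - a 0 * b 2, a 0 * b 1 - a 1 * b 0]

/-- The Hermitian dot product `(a | b) = Σⱼ aⱼ conj(bⱼ)` on ℂ³. -/
noncomputable def herm (a b : Fin 3 → ℂ) : ℂ := ∑ j : Fin 3, a j * (starRingEnd ℂ) (b j)

/-- A real vector `k ∈ ℝ³` regarded as an element of ℂ³. -/
def cvec (k : Fin 3 → ℝ) : Fin 3 → ℂ := fun j => (k j : ℂ)

/-! Differentiate the product `(−i k×B̂ | Ê)` and substitute the two Maxwell equations. The term
coming from `∂ₜB̂ = −i k×Ê` is `−(k×(k×Ê) | Ê)`, which equals `|k×Ê|²` because `a ↦ k×a` is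
skew-adjoint for real `k`; the term coming from `∂ₜÊ` gives `−|k×B̂|² + (i k×B̂ | Ĝ)`. -/

section Algebra

variable (a b c : Fin 3 → ℂ) (z : ℂ)

lemma cross3_smul_right : cross3 a (z • b) = z • cross3 a b := by
  ext j
  fin_cases j <;>
    simp only [cross3, Pi.smul_apply, smul_eq_mul, Fin.zero_eta, Fin.mk_one, Fin.reduceFinMk,
      Matrix.cons_val_zero, Matrix.cons_val_one, Matrix.cons_val] <;> ring

lemma cross3_neg_right : cross3 a (-b) = -cross3 a b := by
  simpa using cross3_smul_right a b (-1)

lemma herm_smul_left : herm (z • a) b = z * herm a b := by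
  simp only [herm, Pi.smul_apply, smul_eq_mul, Finset.mul_sum, mul_assoc]

lemma herm_neg_left : herm (-a) b = -herm a b := by
  simpa using herm_smul_left a b (-1)

lemma herm_smul_right : herm a (z • b) = starRingEnd ℂ z * herm a b := by
  simp only [herm, Pi.smul_apply, smul_eq_mul, map_mul, Finset.mul_sum]
  exact Finset.sum_congr rfl fun _ _ => by ring

lemma herm_sub_right : herm a (b - c) = herm a b - herm a c := by
  simp only [herm, Pi.sub_apply, map_sub, mul_sub, Finset.sum_sub_distrib]

lemma herm_self : herm a a = ((∑ j : Fin 3, ‖a j‖ ^ 2 : ℝ) : ℂ) := by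
  simp only [herm, Complex.mul_conj, Complex.normSq_eq_norm_sq, Complex.ofReal_sum,
    Complex.ofReal_pow]

lemma herm_cross3_cvec_left (k : Fin 3 → ℝ) :
    herm (cross3 (cvec k) a) b = -herm a (cross3 (cvec k) b) := by
  simp only [herm, cross3, cvec, Fin.sum_univ_three, Matrix.cons_val_zero, Matrix.cons_val_one,
    Matrix.cons_val_two, Matrix.head_cons, Matrix.tail_cons, map_sub, map_mul,
    Complex.conj_ofReal]
  ring

end Algebra

lemma HasDerivWithinAt.const_cross3 {f : ℝ → Fin 3 → ℂ} {f' : Fin 3 → ℂ} {s : Set ℝ} {t : ℝ}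
    (a : Fin 3 → ℂ) (hf : HasDerivWithinAt f f' s t) :
    HasDerivWithinAt (fun x => cross3 a (f x)) (cross3 a f') s t := by
  have hfj := hasDerivWithinAt_pi.1 hf
  refine hasDerivWithinAt_pi.2 fun j => ?_
  fin_cases j <;> exact ((hfj _).const_mul _).sub ((hfj _).const_mul _)

lemma HasDerivWithinAt.herm {f g : ℝ → Fin 3 → ℂ} {f' g' : Fin 3 → ℂ} {s : Set ℝ} {t : ℝ}
    (hf : HasDerivWithinAt f f' s t) (hg : HasDerivWithinAt g g' s t) :
    HasDerivWithinAt (fun x => herm (f x) (g x)) (herm f' (g t) + herm (f t) g') s t := by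
  have hfj := hasDerivWithinAt_pi.1 hf
  have hgj := hasDerivWithinAt_pi.1 hg
  simp only [_root_.herm, ← Finset.sum_add_distrib]
  exact HasDerivWithinAt.fun_sum fun j _ => (hfj j).mul (hgj j).star

theorem stmt_17 (k : Fin 3 → ℝ) (E B E' B' G : ℝ → Fin 3 → ℂ)
    (hE : ∀ t ∈ Set.Ici (0 : ℝ), HasDerivWithinAt E (E' t) (Set.Ici 0) t)
    (hB : ∀ t ∈ Set.Ici (0 : ℝ), HasDerivWithinAt B (B' t) (Set.Ici 0) t)
    (hMax1 : ∀ t ∈ Set.Ici (0 : ℝ),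
      E' t - Complex.I • cross3 (cvec k) (B t) = -G t)
    (hMax2 : ∀ t ∈ Set.Ici (0 : ℝ),
      B' t + Complex.I • cross3 (cvec k) (E t) = 0) :
    ∀ t ∈ Set.Ici (0 : ℝ),
      HasDerivWithinAt
        (fun s => herm ((-Complex.I) • cross3 (cvec k) (B s)) (E s))
        (((∑ j : Fin 3, ‖cross3 (cvec k) (E t) j‖ ^ 2 : ℝ) : ℂ)
          + herm (Complex.I • cross3 (cvec k) (B t)) (G t)
          - ((∑ j : Fin 3, ‖cross3 (cvec k) (B t) j‖ ^ 2 : ℝ) : ℂ))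
        (Set.Ici 0) t := by
  intro t ht
  have hB' : B' t = -(I • cross3 (cvec k) (E t)) := by linear_combination hMax2 t ht
  have hE' : E' t = I • cross3 (cvec k) (B t) - G t := by linear_combination hMax1 t ht
  have hkB : HasDerivWithinAt (fun s => -I • cross3 (cvec k) (B s))
      (-I • cross3 (cvec k) (B' t)) (Ici 0) t :=
    ((hB t ht).const_cross3 (cvec k)).const_smul (-I)
  convert hkB.herm (hE t ht) using 1
  rw [hB', hE']
  simp only [cross3_neg_right, cross3_smul_right, herm_neg_left, herm_smul_left, herm_sub_right,
    herm_smul_right, herm_cross3_cvec_left (cross3 (cvec k) (E t)) (E t) k, herm_self, conj_I]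
  simp only [neg_mul, mul_neg, neg_neg, ← mul_assoc, I_mul_I]
  ring
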